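/- The actually occurring configuration selected by the race policy minimizes nothing in general, but its execution time is a lower bound condition for monotony: if for every OrchNet N in a pre-OrchNet ℕ, every daemon value ω, and every maximal configuration κ of the underlying net, E_ω(κ, N) ≥ E_ω(κ̄(N, ω), N) (where κ̄(N, ω) is the configuration actually occurring under the race policy), then ℕ is monotonic. -/

import Mathlib

open scoped ENNReal Classical

/-- A Petri net: sets of places and transitions with flow given by pre/post sets,
    and initial marking `M0`. -/
structure PetriNet where
  P : Type
  T : Type
  pre : T → Set P
  post : T → Set P
  M0 : Set P

namespace PetriNet

variable (N : PetriNet)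

/-- Nodes of a net: places or transitions. -/
abbrev Node := N.P ⊕ N.T

/-- One-step flow relation. -/
def prec : N.Node → N.Node → Prop
  | Sum.inl p, Sum.inr t => p ∈ N.pre t
  | Sum.inr t, Sum.inl p => p ∈ N.post t
  | _, _ => False

/-- Causality (reflexive): reflexive-transitive closure of the flow relation. -/
def causLe : N.Node → N.Node → Prop := Relation.ReflTransGen N.prec

/-- Strict causality. -/
def causLt : N.Node → N.Node → Prop := Relation.TransGen N.prec

/-- Conflict: `x # y` iff distinct transitions below `x` and `y` share a preset place. -/
def Conflict (x y : N.Node) : Prop :=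
  ∃ t t' : N.T, t ≠ t' ∧ N.causLe (Sum.inr t) x ∧ N.causLe (Sum.inr t') y ∧
    (N.pre t ∩ N.pre t').Nonempty

/-- Concurrency. -/
def Concurrent (x y : N.Node) : Prop :=
  ¬ N.causLe x y ∧ ¬ N.causLe y x ∧ ¬ N.Conflict x y

/-- A configuration: causally closed and conflict-free set of nodes. -/
def IsConfiguration (κ : Set N.Node) : Prop :=
  (∀ x y : N.Node, N.causLe x y → y ∈ κ → x ∈ κ) ∧
  (∀ x ∈ κ, ∀ y ∈ κ, ¬ N.Conflict x y)

/-- Maximal configuration. -/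
def IsMaxConfiguration (κ : Set N.Node) : Prop :=
  N.IsConfiguration κ ∧ ∀ κ', N.IsConfiguration κ' → κ ⊆ κ' → κ' = κ

/-- A minimal place: no transition produces it. -/
def Minimal (p : N.P) : Prop := ∀ t : N.T, p ∉ N.post t

/-- Occurrence net: no self-conflict, causality a partial order with finite pasts,
    each place produced by at most one transition, `M0` the minimal places. -/
def IsOccurrenceNet : Prop :=
  (∀ x : N.Node, ¬ N.Conflict x x) ∧
  (∀ x y : N.Node, N.causLe x y → N.causLe y x → x = y) ∧
  (∀ t : N.T, {x : N.Node | N.causLe x (Sum.inr t)}.Finite) ∧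
  (∀ p : N.P, {t : N.T | p ∈ N.post t}.Subsingleton) ∧
  (N.M0 = {p : N.P | N.Minimal p})

/-! ### Timed semantics (dates, race policy) -/

/-- One step of the dating operator: a place gets the date of its producing transition
    (or its initial date if minimal), a transition is dated `max` of its preset dates
    plus its latency. -/
noncomputable def dateF (τ : N.T → ℝ≥0∞) (init : N.P → ℝ≥0∞)
    (f : N.Node → ℝ≥0∞) : N.Node → ℝ≥0∞
  | Sum.inl p => if N.Minimal p then init p else ⨆ t ∈ {t : N.T | p ∈ N.post t}, f (Sum.inr t)
  | Sum.inr t => (⨆ p ∈ N.pre t, f (Sum.inl p)) + τ t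

/-- The date of each node (least fixed point of `dateF`; on finite acyclic nets this is
    the usual recursive definition of dates). -/
noncomputable def date (τ : N.T → ℝ≥0∞) (init : N.P → ℝ≥0∞) : N.Node → ℝ≥0∞ :=
  ⨆ k, (N.dateF τ init)^[k] ⊥

/-- Execution time (latency) of a set of nodes: max of the dates of its nodes. -/
noncomputable def execTime (τ : N.T → ℝ≥0∞) (init : N.P → ℝ≥0∞) (κ : Set N.Node) : ℝ≥0∞ :=
  ⨆ x ∈ κ, N.date τ init x

/-- Transition `t` can extend configuration `κ`: it is enabled (preset in `κ`),
    not yet fired, and firing it keeps a configuration (no conflict with `κ`). -/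
def Extends (κ : Set N.Node) (t : N.T) : Prop :=
  Sum.inr t ∉ κ ∧ (∀ p ∈ N.pre t, Sum.inl p ∈ κ) ∧
  N.IsConfiguration (κ ∪ {Sum.inr t} ∪ Sum.inl '' N.post t)

/-- One step of the race policy: among the enabled transitions, one with minimal
    date fires (preempting its conflicting rivals). -/
def RaceStep (τ : N.T → ℝ≥0∞) (init : N.P → ℝ≥0∞) (κ κ' : Set N.Node) : Prop :=
  ∃ t : N.T, N.Extends κ t ∧
    (∀ t' : N.T, N.Extends κ t' → N.date τ init (Sum.inr t) ≤ N.date τ init (Sum.inr t')) ∧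
    κ' = κ ∪ {Sum.inr t} ∪ Sum.inl '' N.post t

/-- The initial configuration: the minimal places. -/
def initConf : Set N.Node := Sum.inl '' {p : N.P | N.Minimal p}

/-- `κ` is an actually occurring configuration under the race policy. -/
def Occurs (τ : N.T → ℝ≥0∞) (init : N.P → ℝ≥0∞) (κ : Set N.Node) : Prop :=
  Relation.ReflTransGen (N.RaceStep τ init) N.initConf κ ∧ ∀ t : N.T, ¬ N.Extends κ t

/-! ### Clusters -/

/-- Closure conditions for clusters: `t ∈ c → •t ⊆ c` and `p ∈ c → p• ⊆ c`. -/
def ClusterClosed (c : Set N.Node) : Prop :=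
  (∀ t : N.T, Sum.inr t ∈ c → ∀ p ∈ N.pre t, Sum.inl p ∈ c) ∧
  (∀ p : N.P, Sum.inl p ∈ c → ∀ t : N.T, p ∈ N.pre t → Sum.inr t ∈ c)

/-- A cluster: a minimal nonempty set of nodes satisfying the closure conditions. -/
def IsCluster (c : Set N.Node) : Prop :=
  c.Nonempty ∧ N.ClusterClosed c ∧
  ∀ c' : Set N.Node, c'.Nonempty → N.ClusterClosed c' → c' ⊆ c → c' = c

/-! ### Marking semantics, workflow nets -/

/-- Firing a transition in the (1-safe, set-based) marking semantics. -/
def Fires (M : Set N.P) (t : N.T) (M' : Set N.P) : Prop :=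
  N.pre t ⊆ M ∧ M' = (M \ N.pre t) ∪ N.post t

/-- Reachability between markings. -/
def Reach : Set N.P → Set N.P → Prop :=
  Relation.ReflTransGen (fun M M' => ∃ t : N.T, N.Fires M t M')

end PetriNet

open PetriNet

/-- Workflow net with source place `i` and sink place `o`. -/
def IsWorkflow (N : PetriNet) (i o : N.P) : Prop :=
  (∀ p : N.P, (∀ t : N.T, p ∉ N.post t) ↔ p = i) ∧
  (∀ p : N.P, (∀ t : N.T, p ∉ N.pre t) ↔ p = o) ∧
  N.M0 = {i}

/-- Soundness of a workflow net. -/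
def IsSound (N : PetriNet) (i o : N.P) : Prop :=
  (∀ M, N.Reach {i} M → N.Reach M {o}) ∧
  (∀ M, N.Reach {i} M → o ∈ M → M = {o}) ∧
  (∀ t : N.T, ∃ M, N.Reach {i} M ∧ N.pre t ⊆ M)

/-- 1-safety in the set-based semantics: a fired transition never re-marks a
    still-marked place. -/
def IsSafe (N : PetriNet) (i : N.P) : Prop :=
  ∀ M t M', N.Reach {i} M → N.Fires M t M' → (M \ N.pre t) ∩ N.post t = ∅

/-- Loop-freeness: the flow relation is acyclic. -/
def LoopFree (N : PetriNet) : Prop := ∀ x : N.Node, ¬ N.causLt x x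

/-- Net morphism: maps places to places and transitions to transitions, restricting
    to bijections on presets and postsets of transitions. -/
structure NetMorphism (U W : PetriNet) where
  fP : U.P → W.P
  fT : U.T → W.T
  pre_bij : ∀ t : U.T, Set.BijOn fP (U.pre t) (W.pre (fT t))
  post_bij : ∀ t : U.T, Set.BijOn fP (U.post t) (W.post (fT t))

/-- The induced map on nodes. -/
def NetMorphism.node {U W : PetriNet} (φ : NetMorphism U W) : U.Node → W.Node :=
  Sum.map φ.fP φ.fT

/-- `(U, φ)` is (a) branching-process unfolding of `W`: `U` is an occurrence net,
    `φ` a morphism mapping the minimal places of `U` bijectively onto those of `W`,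
    and every co-set of `U` matching the preset of a transition of `W` is the preset
    of exactly one transition of `U` above it. -/
def IsUnfolding (U W : PetriNet) (φ : NetMorphism U W) : Prop :=
  U.IsOccurrenceNet ∧
  Set.BijOn φ.fP {p : U.P | U.Minimal p} {p : W.P | ∀ t : W.T, p ∉ W.post t} ∧
  (∀ (X : Set U.P) (u : W.T),
    (∀ p ∈ X, ∀ q ∈ X, p = q ∨ U.Concurrent (Sum.inl p) (Sum.inl q)) →
    Set.BijOn φ.fP X (W.pre u) →
    ∃! t : U.T, U.pre t = X ∧ φ.fT t = u)

/-!
The configuration `κ` occurring under the larger latencies is maximal: the race stops only when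
no transition can extend `κ`, while in an occurrence net a causally minimal node of a larger
configuration would be such a transition. The hypothesis, applied to the smaller latencies,
therefore bounds the execution time of the configuration they make occur by that of `κ` computed
with the smaller latencies; and this is at most the execution time of `κ` under the larger ones,
because dates are the least fixed point of a dating operator that is monotone in latencies and
initial dates.
-/

namespace PetriNet

variable {N : PetriNet}

lemma causLe_closed_of_prec_closed {S : Set N.Node}
    (h : ∀ x y : N.Node, N.prec x y → y ∈ S → x ∈ S) :
    ∀ x y : N.Node, N.causLe x y → y ∈ S → x ∈ S := by
  intro x y hxy hy
  induction hxy using Relation.ReflTransGen.head_induction_on with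
  | refl => exact hy
  | head hstep _ ih => exact h _ _ hstep ih

lemma exists_mem_post_of_causLe_inl {x : N.Node} {p : N.P}
    (h : N.causLe x (Sum.inl p)) (hx : x ≠ Sum.inl p) :
    ∃ t : N.T, p ∈ N.post t ∧ N.causLe x (Sum.inr t) := by
  rcases h.cases_tail with rfl | ⟨c, hc, hstep⟩
  · exact absurd rfl hx
  · cases c with
    | inl q => cases hstep
    | inr t => exact ⟨t, hstep, hc⟩

lemma Minimal.eq_of_causLe {p : N.P} (hp : N.Minimal p) {x : N.Node}
    (h : N.causLe x (Sum.inl p)) : x = Sum.inl p := by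
  by_contra hx
  obtain ⟨t, ht, -⟩ := exists_mem_post_of_causLe_inl h hx
  exact hp t ht

lemma isConfiguration_initConf : N.IsConfiguration N.initConf := by
  constructor
  · refine causLe_closed_of_prec_closed ?_
    rintro (q | t) y hxy ⟨p, hp, rfl⟩
    · cases hxy
    · exact absurd hxy (hp t)
  · rintro x ⟨p, hp, rfl⟩ y - ⟨t, -, -, ht, -, -⟩
    cases hp.eq_of_causLe ht

lemma raceStep_reachable_invariant {τ : N.T → ℝ≥0∞} {init : N.P → ℝ≥0∞} {κ : Set N.Node}
    (h : Relation.ReflTransGen (N.RaceStep τ init) N.initConf κ) :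
    N.initConf ⊆ κ ∧ (∀ t : N.T, Sum.inr t ∈ κ → ∀ p ∈ N.post t, Sum.inl p ∈ κ) ∧
      N.IsConfiguration κ := by
  induction h with
  | refl =>
    refine ⟨subset_rfl, ?_, isConfiguration_initConf⟩
    rintro t ⟨p, -, ⟨⟩⟩
  | tail _ hstep ih =>
    obtain ⟨hinit, hpost, -⟩ := ih
    obtain ⟨t, hext, -, rfl⟩ := hstep
    refine ⟨hinit.trans (Set.subset_union_left.trans Set.subset_union_left), ?_, hext.2.2⟩
    rintro t' ((ht' | ht') | ⟨q, -, ⟨⟩⟩) p hp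
    · exact Or.inl (Or.inl (hpost t' ht' p hp))
    · obtain rfl : t' = t := Sum.inr_injective ht'
      exact Or.inr ⟨p, hp, rfl⟩

namespace IsOccurrenceNet

lemma causLt_irrefl (hN : N.IsOccurrenceNet) (x : N.Node) : ¬ N.causLt x x := by
  intro h
  obtain ⟨z, hxz, hzx⟩ := Relation.TransGen.head'_iff.mp h
  obtain rfl : x = z := hN.2.1 x z (Relation.ReflTransGen.single hxz) hzx
  cases x <;> cases hxz

lemma finite_causLe_past (hN : N.IsOccurrenceNet) (x : N.Node) :
    {y : N.Node | N.causLe y x}.Finite := by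
  rcases x with p | t
  · refine ((Set.finite_singleton (Sum.inl p)).union
      ((hN.2.2.2.1 p).finite.biUnion fun t _ => hN.2.2.1 t)).subset ?_
    intro y hy
    by_cases hyp : y = Sum.inl p
    · exact Or.inl hyp
    · obtain ⟨t, ht, hyt⟩ := exists_mem_post_of_causLe_inl hy hyp
      exact Or.inr (Set.mem_biUnion ht hyt)
  · exact hN.2.2.1 t

/-- Finite pasts make causality well founded: a strict predecessor has a strictly smaller past. -/
lemma wellFounded_causLt (hN : N.IsOccurrenceNet) : WellFounded N.causLt := by
  refine (InvImage.wf (fun x => {y | N.causLe y x}.ncard) wellFounded_lt).mono ?_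
  intro y x hyx
  refine Set.ncard_lt_ncard ⟨fun z hz => hz.trans hyx.to_reflTransGen, fun hsub => ?_⟩
    (hN.finite_causLe_past x)
  exact hN.causLt_irrefl x (Relation.TransGen.trans_right (hsub Relation.ReflTransGen.refl) hyx)

lemma isConfiguration_union_post (hN : N.IsOccurrenceNet) {κ κ' : Set N.Node} {t : N.T}
    (hκ : N.IsConfiguration κ) (hκ' : N.IsConfiguration κ') (hsub : κ ⊆ κ')
    (ht : Sum.inr t ∈ κ') (hpre : ∀ p ∈ N.pre t, Sum.inl p ∈ κ) :
    N.IsConfiguration (κ ∪ {Sum.inr t} ∪ Sum.inl '' N.post t) := by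
  have hproducer : ∀ q ∈ N.post t, ∀ t', q ∈ N.post t' → t' = t :=
    fun q hq t' hq' => hN.2.2.2.1 q hq' hq
  constructor
  · refine causLe_closed_of_prec_closed ?_
    rintro (p | t') y hzy ((hy | rfl) | ⟨q, hq, rfl⟩)
    · exact Or.inl (Or.inl (hκ.1 _ y (Relation.ReflTransGen.single hzy) hy))
    · exact Or.inl (Or.inl (hpre p hzy))
    · cases hzy
    · exact Or.inl (Or.inl (hκ.1 _ y (Relation.ReflTransGen.single hzy) hy))
    · cases hzy
    · exact Or.inl (Or.inr (congrArg Sum.inr (hproducer q hq t' hzy)))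
  · -- a conflict is witnessed by transitions in the pasts of the two nodes
    have hdom : ∀ u ∈ κ ∪ {Sum.inr t} ∪ Sum.inl '' N.post t, ∃ v ∈ κ',
        ∀ s : N.T, N.causLe (Sum.inr s) u → N.causLe (Sum.inr s) v := by
      rintro u ((hu | rfl) | ⟨q, hq, rfl⟩)
      · exact ⟨u, hsub hu, fun s hs => hs⟩
      · exact ⟨Sum.inr t, ht, fun s hs => hs⟩
      · refine ⟨Sum.inr t, ht, fun s hs => ?_⟩
        obtain ⟨t', ht', hst'⟩ := exists_mem_post_of_causLe_inl hs Sum.inr_ne_inl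
        rwa [hproducer q hq t' ht'] at hst'
    rintro u hu w hw ⟨s, s', hne, hsu, hs'w, hpre⟩
    obtain ⟨v, hv, hdomu⟩ := hdom u hu
    obtain ⟨v', hv', hdomw⟩ := hdom w hw
    exact hκ'.2 v hv v' hv' ⟨s, s', hne, hdomu s hsu, hdomw s' hs'w, hpre⟩

/-- A causally minimal node of `κ' \ κ` is a transition that can extend `κ`. -/
lemma exists_extends (hN : N.IsOccurrenceNet) {κ κ' : Set N.Node}
    (hinit : N.initConf ⊆ κ) (hpost : ∀ t : N.T, Sum.inr t ∈ κ → ∀ p ∈ N.post t, Sum.inl p ∈ κ)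
    (hκ : N.IsConfiguration κ) (hκ' : N.IsConfiguration κ') (hsub : κ ⊆ κ') (hne : κ' ≠ κ) :
    ∃ t : N.T, N.Extends κ t := by
  obtain ⟨x, hx, hxmin⟩ := hN.wellFounded_causLt.has_min (κ' \ κ)
    (Set.sdiff_nonempty.mpr fun h => hne (h.antisymm hsub))
  have hpred : ∀ y, N.prec y x → y ∈ κ := fun y hyx => by
    by_contra hy
    exact hxmin y ⟨hκ'.1 y x (Relation.ReflTransGen.single hyx) hx.1, hy⟩
      (Relation.TransGen.single hyx)
  rcases x with p | t
  · by_cases hp : N.Minimal p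
    · exact absurd (hinit ⟨p, hp, rfl⟩) hx.2
    · obtain ⟨t, ht⟩ := not_forall_not.mp hp
      exact absurd (hpost t (hpred (Sum.inr t) ht) p ht) hx.2
  · have hpre : ∀ p ∈ N.pre t, Sum.inl p ∈ κ := fun p hp => hpred (Sum.inl p) hp
    exact ⟨t, hx.2, hpre, hN.isConfiguration_union_post hκ hκ' hsub hx.1 hpre⟩

lemma isMaxConfiguration_of_occurs (hN : N.IsOccurrenceNet) {τ : N.T → ℝ≥0∞}
    {init : N.P → ℝ≥0∞} {κ : Set N.Node} (h : N.Occurs τ init κ) : N.IsMaxConfiguration κ := by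
  obtain ⟨hreach, hstuck⟩ := h
  obtain ⟨hinit, hpost, hκ⟩ := raceStep_reachable_invariant hreach
  refine ⟨hκ, fun κ' hκ' hsub => ?_⟩
  by_contra hne
  obtain ⟨t, ht⟩ := hN.exists_extends hinit hpost hκ hκ' hsub hne
  exact hstuck t ht

end IsOccurrenceNet

lemma dateF_iterate_mono {τ τ' : N.T → ℝ≥0∞} {init init' : N.P → ℝ≥0∞}
    (hτ : ∀ t, τ' t ≤ τ t) (hinit : ∀ p, init' p ≤ init p) (k : ℕ) :
    (N.dateF τ' init')^[k] ⊥ ≤ (N.dateF τ init)^[k] ⊥ := by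
  induction k with
  | zero => exact le_rfl
  | succ k ih =>
    rw [Function.iterate_succ_apply', Function.iterate_succ_apply']
    rintro (p | t)
    · simp only [dateF]
      split
      · exact hinit p
      · exact iSup₂_mono fun t _ => ih (Sum.inr t)
    · exact add_le_add (iSup₂_mono fun p _ => ih (Sum.inl p)) (hτ t)

lemma date_mono {τ τ' : N.T → ℝ≥0∞} {init init' : N.P → ℝ≥0∞}
    (hτ : ∀ t, τ' t ≤ τ t) (hinit : ∀ p, init' p ≤ init p) :
    N.date τ' init' ≤ N.date τ init :=
  iSup_mono (dateF_iterate_mono hτ hinit)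

lemma execTime_mono {τ τ' : N.T → ℝ≥0∞} {init init' : N.P → ℝ≥0∞}
    (hτ : ∀ t, τ' t ≤ τ t) (hinit : ∀ p, init' p ≤ init p) (κ : Set N.Node) :
    N.execTime τ' init' κ ≤ N.execTime τ init κ :=
  iSup₂_mono fun x _ => date_mono hτ hinit x

end PetriNet

theorem stmt7_general (N : PetriNet) (hN : N.IsOccurrenceNet)
    {Ω : Type}
    (𝕋 : Set (Ω → N.T → ℝ≥0∞)) (𝕀 : Set (Ω → N.P → ℝ≥0∞))
    (hcond : ∀ T ∈ 𝕋, ∀ I ∈ 𝕀, ∀ ω : Ω, ∀ κ : Set N.Node, N.IsMaxConfiguration κ →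
      ∀ κocc : Set N.Node, N.Occurs (T ω) (I ω) κocc →
        N.execTime (T ω) (I ω) κocc ≤ N.execTime (T ω) (I ω) κ) :
    -- monotony: larger latencies and initial dates give larger end-to-end latency
    ∀ T ∈ 𝕋, ∀ T' ∈ 𝕋, ∀ I ∈ 𝕀, ∀ I' ∈ 𝕀,
      (∀ ω t, T' ω t ≤ T ω t) → (∀ ω p, I' ω p ≤ I ω p) →
      ∀ ω : Ω, ∀ κ κ' : Set N.Node,
        N.Occurs (T ω) (I ω) κ → N.Occurs (T' ω) (I' ω) κ' →
        N.execTime (T' ω) (I' ω) κ' ≤ N.execTime (T ω) (I ω) κ := by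
  intro T _ T' hT' I _ I' hI' hτ hinit ω κ κ' hocc hocc'
  calc N.execTime (T' ω) (I' ω) κ'
      ≤ N.execTime (T' ω) (I' ω) κ :=
        hcond T' hT' I' hI' ω κ (hN.isMaxConfiguration_of_occurs hocc) κ' hocc'
    _ ≤ N.execTime (T ω) (I ω) κ := execTime_mono (hτ ω) (hinit ω) κ

/-- Theorem 1, statement 1: if for every allowed latency/initial-date
    assignment, every daemon-resolved instance, and every maximal configuration `κ`,
    the execution time of `κ` dominates that of the actually occurring configuration,
    then the pre-OrchNet is monotonic. -/
theorem stmt7 (N : PetriNet) [Fintype N.P] [Fintype N.T] (hN : N.IsOccurrenceNet)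
    {Ω : Type}
    (𝕋 : Set (Ω → N.T → ℝ≥0∞)) (𝕀 : Set (Ω → N.P → ℝ≥0∞))
    (hcond : ∀ T ∈ 𝕋, ∀ I ∈ 𝕀, ∀ ω : Ω, ∀ κ : Set N.Node, N.IsMaxConfiguration κ →
      ∀ κocc : Set N.Node, N.Occurs (T ω) (I ω) κocc →
        N.execTime (T ω) (I ω) κocc ≤ N.execTime (T ω) (I ω) κ) :
    -- monotony: larger latencies and initial dates give larger end-to-end latency
    ∀ T ∈ 𝕋, ∀ T' ∈ 𝕋, ∀ I ∈ 𝕀, ∀ I' ∈ 𝕀,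
      (∀ ω t, T' ω t ≤ T ω t) → (∀ ω p, I' ω p ≤ I ω p) →
      ∀ ω : Ω, ∀ κ κ' : Set N.Node,
        N.Occurs (T ω) (I ω) κ → N.Occurs (T' ω) (I' ω) κ' →
        N.execTime (T' ω) (I' ω) κ' ≤ N.execTime (T ω) (I ω) κ :=
  stmt7_general N hN 𝕋 𝕀 hcond
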